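/- Let p ≥ 1, let E₁,…,Eₙ be normed spaces over 𝕂, and let f : E₁⊗⋯⊗Eₙ → 𝕂 be a linear functional such that |f(u)| ≤ C·σ_p(u) for all u ∈ E₁⊗⋯⊗Eₙ, where C ≥ 0. Then the n-linear form A(x₁,…,xₙ) = f(x₁⊗⋯⊗xₙ) satisfies, for every m ∈ ℕ and all x_{l,j} ∈ E_l (l = 1,…,n, j = 1,…,m): ( Σ_{j=1}^m |A(x_{1,j},…,x_{n,j})|^p )^{1/p} ≤ C · ( sup_{φ_l ∈ E_l', ‖φ_l‖ ≤ 1} Σ_{j=1}^m |φ₁(x_{1,j})⋯φₙ(x_{n,j})|^p )^{1/p}. -/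

import Mathlib

/-!
Hölder duality: for `c_j = f(x_{1,j} ⊗ ⋯ ⊗ x_{n,j})` the weights `λ_j = |c_j|^{p-2} c̄_j`
satisfy `Σ_j λ_j c_j = Σ_j |c_j|^p =: T` and `‖λ‖_q ≤ T^{1/q}`. Testing the bound on `f` against
`u = Σ_j λ_j x_{1,j} ⊗ ⋯ ⊗ x_{n,j}`, for which `σ_p(u) ≤ ‖λ‖_q · S^{1/p}`, gives
`T ≤ C · T^{1/q} · S^{1/p}`, and dividing by `T^{1/q}` yields `T^{1/p} ≤ C · S^{1/p}`.
-/

open scoped TensorProduct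
open PiTensorProduct

/-- The `ℓ_q` norm of a finite family of scalars, where `q` is the conjugate exponent
of `p` (`1/p + 1/q = 1`, with `q = ∞`, i.e. the sup norm, when `p = 1`). -/
noncomputable def lqNorm {𝕜 : Type*} [RCLike 𝕜] (p : ℝ) {m : ℕ} (lam : Fin m → 𝕜) : ℝ :=
  if p = 1 then ⨆ j, ‖lam j‖ else (∑ j, ‖lam j‖ ^ (p / (p - 1))) ^ ((p - 1) / p)

/-- `sup_{‖φ_l‖ ≤ 1} Σ_j |φ₁(x_{1,j}) ⋯ φₙ(x_{n,j})|^p`. -/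
noncomputable def supTerm (𝕜 : Type*) [RCLike 𝕜] {n : ℕ} {E : Fin n → Type*}
    [∀ i, NormedAddCommGroup (E i)] [∀ i, NormedSpace 𝕜 (E i)]
    (p : ℝ) {m : ℕ} (x : Fin m → Π i, E i) : ℝ :=
  ⨆ φ : {φ : Π i, E i →L[𝕜] 𝕜 // ∀ i, ‖φ i‖ ≤ 1},
    ∑ j, (∏ i, ‖φ.1 i (x j i)‖) ^ p

/-- The tensor norm `σ_p` on `E₁ ⊗ ⋯ ⊗ Eₙ`. -/
noncomputable def sigmaNorm {𝕜 : Type*} [RCLike 𝕜] {n : ℕ} {E : Fin n → Type*}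
    [∀ i, NormedAddCommGroup (E i)] [∀ i, NormedSpace 𝕜 (E i)]
    (p : ℝ) (u : ⨂[𝕜] i, E i) : ℝ :=
  sInf { r : ℝ | ∃ (m : ℕ) (lam : Fin m → 𝕜) (x : Fin m → Π i, E i),
    u = (∑ j, lam j • ⨂ₜ[𝕜] i, x j i) ∧
    r = lqNorm p lam * (supTerm 𝕜 p x) ^ (1/p) }

section HolderDual

variable {𝕜 : Type*} [RCLike 𝕜]

lemma norm_rpow_sub_two_mul_conj_le (p : ℝ) (z : 𝕜) :
    ‖((‖z‖ ^ (p - 2) : ℝ) : 𝕜) * starRingEnd 𝕜 z‖ ≤ ‖z‖ ^ (p - 1) := by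
  rw [norm_mul, RCLike.norm_conj, RCLike.norm_ofReal, abs_of_nonneg (by positivity)]
  rcases eq_or_ne z 0 with rfl | hz
  · simp only [norm_zero, mul_zero]
    positivity
  · rw [← Real.rpow_add_one (norm_ne_zero_iff.mpr hz), show p - 2 + 1 = p - 1 by ring]

lemma rpow_sub_two_mul_conj_mul_self {p : ℝ} (hp : 0 < p) (z : 𝕜) :
    ((‖z‖ ^ (p - 2) : ℝ) : 𝕜) * starRingEnd 𝕜 z * z = ((‖z‖ ^ p : ℝ) : 𝕜) := by
  rcases eq_or_ne z 0 with rfl | hz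
  · simp [Real.zero_rpow hp.ne']
  · have hz' : 0 < ‖z‖ := norm_pos_iff.mpr hz
    rw [mul_assoc, RCLike.conj_mul, ← RCLike.ofReal_pow, ← RCLike.ofReal_mul,
      ← Real.rpow_natCast, ← Real.rpow_add hz']
    norm_num

lemma lqNorm_le_of_norm_le_rpow {p : ℝ} (hp : 1 ≤ p) {m : ℕ} {lam : Fin m → 𝕜}
    {a : Fin m → ℝ} (ha : ∀ j, 0 ≤ a j) (hlam : ∀ j, ‖lam j‖ ≤ a j ^ (p - 1)) :
    lqNorm p lam ≤ (∑ j, a j ^ p) ^ ((p - 1) / p) := by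
  unfold lqNorm
  split_ifs with hp1
  · subst hp1
    simpa using Real.iSup_le (fun j => by simpa using hlam j) zero_le_one
  · have hq : 0 < p - 1 := sub_pos.mpr (lt_of_le_of_ne hp (Ne.symm hp1))
    refine Real.rpow_le_rpow (by positivity) (Finset.sum_le_sum fun j _ => ?_) (by positivity)
    calc ‖lam j‖ ^ (p / (p - 1)) ≤ (a j ^ (p - 1)) ^ (p / (p - 1)) :=
          Real.rpow_le_rpow (norm_nonneg _) (hlam j) (by positivity)
      _ = a j ^ p := by
          rw [← Real.rpow_mul (ha j), mul_div_cancel₀ _ hq.ne']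

lemma exists_lqNorm_le_and_sum_mul_eq {p : ℝ} (hp : 1 ≤ p) {m : ℕ} (c : Fin m → 𝕜) :
    ∃ lam : Fin m → 𝕜, lqNorm p lam ≤ (∑ j, ‖c j‖ ^ p) ^ ((p - 1) / p) ∧
      ∑ j, lam j * c j = ((∑ j, ‖c j‖ ^ p : ℝ) : 𝕜) := by
  refine ⟨fun j => ((‖c j‖ ^ (p - 2) : ℝ) : 𝕜) * starRingEnd 𝕜 (c j),
    lqNorm_le_of_norm_le_rpow hp (fun j => norm_nonneg _)
      (fun j => norm_rpow_sub_two_mul_conj_le p (c j)), ?_⟩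
  simp only [RCLike.ofReal_sum, rpow_sub_two_mul_conj_mul_self (by linarith : 0 < p)]

end HolderDual

lemma Real.rpow_one_div_le_of_le_rpow_mul {T K p : ℝ} (hT : 0 ≤ T) (hK : 0 ≤ K) (hp : 0 < p)
    (h : T ≤ T ^ ((p - 1) / p) * K) : T ^ (1 / p) ≤ K := by
  rcases hT.eq_or_lt with rfl | hT
  · rwa [Real.zero_rpow (one_div_pos.mpr hp).ne']
  · refine le_of_mul_le_mul_left ?_ (Real.rpow_pos_of_pos hT ((p - 1) / p))
    rwa [← Real.rpow_add hT, ← add_div, sub_add_cancel, div_self hp.ne', Real.rpow_one]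

section SigmaNorm

variable {𝕜 : Type*} [RCLike 𝕜] {n : ℕ} {E : Fin n → Type*}
  [∀ i, NormedAddCommGroup (E i)] [∀ i, NormedSpace 𝕜 (E i)]

lemma lqNorm_nonneg (p : ℝ) {m : ℕ} (lam : Fin m → 𝕜) : 0 ≤ lqNorm p lam := by
  unfold lqNorm
  split_ifs
  · exact Real.iSup_nonneg fun j => norm_nonneg _
  · positivity

lemma supTerm_nonneg (p : ℝ) {m : ℕ} (x : Fin m → Π i, E i) : 0 ≤ supTerm 𝕜 p x :=
  Real.iSup_nonneg fun _ => by positivity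

lemma sigmaNorm_sum_smul_tprod_le (p : ℝ) {m : ℕ} (lam : Fin m → 𝕜) (x : Fin m → Π i, E i) :
    sigmaNorm p (∑ j, lam j • ⨂ₜ[𝕜] i, x j i) ≤ lqNorm p lam * supTerm 𝕜 p x ^ (1 / p) := by
  refine csInf_le ⟨0, ?_⟩ ⟨m, lam, x, rfl, rfl⟩
  rintro r ⟨-, lam', x', -, rfl⟩
  exact mul_nonneg (lqNorm_nonneg p lam') (Real.rpow_nonneg (supTerm_nonneg p x') _)

end SigmaNorm

theorem semiIntegral_of_sigma_bounded_general {𝕜 : Type*} [RCLike 𝕜] {n : ℕ}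
    (E : Fin n → Type*) [∀ i, NormedAddCommGroup (E i)] [∀ i, NormedSpace 𝕜 (E i)]
    (p : ℝ) (hp : 1 ≤ p) (C : ℝ) (hC : 0 ≤ C)
    (f : (⨂[𝕜] i, E i) →ₗ[𝕜] 𝕜) (hf : ∀ u, ‖f u‖ ≤ C * sigmaNorm p u)
    (m : ℕ) (x : Fin m → Π i, E i) :
    (∑ j, ‖f (⨂ₜ[𝕜] i, x j i)‖ ^ p) ^ (1/p) ≤ C * (supTerm 𝕜 p x) ^ (1/p) := by
  set T := ∑ j, ‖f (⨂ₜ[𝕜] i, x j i)‖ ^ p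
  have hT : 0 ≤ T := by positivity
  obtain ⟨lam, hlam, hsum⟩ := exists_lqNorm_le_and_sum_mul_eq hp fun j => f (⨂ₜ[𝕜] i, x j i)
  have hfu : f (∑ j, lam j • ⨂ₜ[𝕜] i, x j i) = (T : 𝕜) := by
    rw [map_sum, ← hsum]
    simp only [map_smul, smul_eq_mul]
  refine Real.rpow_one_div_le_of_le_rpow_mul hT
    (mul_nonneg hC (Real.rpow_nonneg (supTerm_nonneg p x) _)) (by linarith) ?_
  calc T = ‖f (∑ j, lam j • ⨂ₜ[𝕜] i, x j i)‖ := by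
        rw [hfu, RCLike.norm_ofReal, abs_of_nonneg hT]
    _ ≤ C * (lqNorm p lam * supTerm 𝕜 p x ^ (1 / p)) :=
        (hf _).trans (mul_le_mul_of_nonneg_left (sigmaNorm_sum_smul_tprod_le p lam x) hC)
    _ ≤ C * (T ^ ((p - 1) / p) * supTerm 𝕜 p x ^ (1 / p)) := by
        gcongr
        exact Real.rpow_nonneg (supTerm_nonneg p x) _
    _ = T ^ ((p - 1) / p) * (C * supTerm 𝕜 p x ^ (1 / p)) := by ring

/-- If a linear functional `f` on `E₁ ⊗ ⋯ ⊗ Eₙ` satisfies `|f(u)| ≤ C·σ_p(u)`, then the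
`n`-linear form `A(x₁, …, xₙ) = f(x₁ ⊗ ⋯ ⊗ xₙ)` is `p`-semi-integral with constant `C`. -/
theorem semiIntegral_of_sigma_bounded {𝕜 : Type*} [RCLike 𝕜] {n : ℕ} (hn : 1 ≤ n)
    (E : Fin n → Type*) [∀ i, NormedAddCommGroup (E i)] [∀ i, NormedSpace 𝕜 (E i)]
    (p : ℝ) (hp : 1 ≤ p) (C : ℝ) (hC : 0 ≤ C)
    (f : (⨂[𝕜] i, E i) →ₗ[𝕜] 𝕜) (hf : ∀ u, ‖f u‖ ≤ C * sigmaNorm p u)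
    (m : ℕ) (x : Fin m → Π i, E i) :
    (∑ j, ‖f (⨂ₜ[𝕜] i, x j i)‖ ^ p) ^ (1/p) ≤ C * (supTerm 𝕜 p x) ^ (1/p) :=
  semiIntegral_of_sigma_bounded_general E p hp C hC f hf m x
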